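/- Let q ≥ 2. Every non-commutative subgroup K of the generalized quaternion group Q_{2^{q+1}} ⊆ SU(2) equals, as a set, μ_{2^r} ∪ w·ξ_{2^q}^p·μ_{2^r} (equivalently, K is the subgroup generated by ξ_{2^r} and w·ξ_{2^q}^p) for some r with 2 ≤ r ≤ q and some p with 0 ≤ p < 2^{q−r}. -/

import Mathlib

open Matrix Complex

noncomputable section

abbrev SU2 := Matrix.specialUnitaryGroup (Fin 2) ℂ

instance SU2.instGroup : Group SU2 :=
  { (inferInstance : Monoid SU2) with
    inv := fun A => ⟨star A.1, by
      rcases A.2 with ⟨hu, hd⟩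
      refine ⟨⟨?_, ?_⟩, ?_⟩
      · simpa using hu.2
      · simpa using hu.1
      · show (star A.1).det = 1
        rw [Matrix.star_eq_conjTranspose, Matrix.det_conjTranspose]
        simp [show A.1.det = 1 from hd]⟩
    inv_mul_cancel := fun A => Subtype.ext A.2.1.1 }

lemma w_mem : !![(0:ℂ), -1; 1, 0] ∈ Matrix.specialUnitaryGroup (Fin 2) ℂ := by
  rw [Matrix.mem_specialUnitaryGroup_iff, Matrix.mem_unitaryGroup_iff]
  constructor
  · ext i j
    fin_cases i <;> fin_cases j <;>
      simp [Matrix.mul_apply, Fin.sum_univ_two, Matrix.star_apply, Complex.star_def]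
  · simp [Matrix.det_fin_two]

def w : SU2 := ⟨!![(0:ℂ), -1; 1, 0], w_mem⟩

lemma xi_conj (m : ℕ) : (starRingEnd ℂ) (2 * Real.pi * Complex.I / m) =
    -(2 * Real.pi * Complex.I / m) := by
  simp [map_div₀, Complex.conj_I, Complex.conj_ofReal, map_ofNat]
  ring

lemma xi_conj_exp (m : ℕ) : (starRingEnd ℂ) (Complex.exp (2 * Real.pi * Complex.I / m)) =
    Complex.exp (-(2 * Real.pi * Complex.I / m)) := by
  rw [← Complex.exp_conj, xi_conj]

lemma xi_conj_exp' (m : ℕ) : (starRingEnd ℂ) (Complex.exp (-(2 * Real.pi * Complex.I / m))) =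
    Complex.exp (2 * Real.pi * Complex.I / m) := by
  rw [← Complex.exp_conj, map_neg, xi_conj, neg_neg]

lemma xi_mem (m : ℕ) :
    !![Complex.exp (2 * Real.pi * Complex.I / m), 0; 0,
       Complex.exp (-(2 * Real.pi * Complex.I / m))]
      ∈ Matrix.specialUnitaryGroup (Fin 2) ℂ := by
  rw [Matrix.mem_specialUnitaryGroup_iff, Matrix.mem_unitaryGroup_iff]
  have hstar : star (!![Complex.exp (2 * Real.pi * Complex.I / m), 0; 0,
       Complex.exp (-(2 * Real.pi * Complex.I / m))]) =
      !![Complex.exp (-(2 * Real.pi * Complex.I / m)), 0; 0,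
       Complex.exp (2 * Real.pi * Complex.I / m)] := by
    ext i j
    fin_cases i <;> fin_cases j <;>
      simp [Matrix.star_apply, Complex.star_def, xi_conj_exp m, xi_conj_exp' m]
  constructor
  · rw [hstar]
    ext i j
    fin_cases i <;> fin_cases j <;>
      simp [Matrix.mul_apply, Fin.sum_univ_two, ← Complex.exp_add]
  · simp [Matrix.det_fin_two, ← Complex.exp_add]

def ξ (m : ℕ) : SU2 :=
  ⟨!![Complex.exp (2 * Real.pi * Complex.I / m), 0; 0,
      Complex.exp (-(2 * Real.pi * Complex.I / m))], xi_mem m⟩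

/-- `μ m` : the cyclic subgroup of `SU2` generated by `ξ m`. -/
def μ (m : ℕ) : Subgroup SU2 := Subgroup.zpowers (ξ m)

/-- `genQ q` is the generalized quaternion group `Q_{2^{q+1}} ⊆ SU2`,
generated by `ξ_{2^q}` and `w`. -/
def genQ (q : ℕ) : Subgroup SU2 := Subgroup.closure {ξ (2 ^ q), w}

/-- Lower central series of a subgroup, as subgroups of the ambient group:
`lcs H k = Γ^{k+1}(H)`, so `lcs H 0 = Γ¹(H) = H` and `lcs H (k+1) = ⁅lcs H k, H⁆`. -/
def lcs {G : Type*} [Group G] (H : Subgroup G) : ℕ → Subgroup G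
  | 0 => H
  | (k + 1) => ⁅lcs H k, H⁆

/-- The set of diagonal matrices in `SU2`: the maximal torus `T`. -/
def Tset : Set SU2 :=
  {x | (x : Matrix (Fin 2) (Fin 2) ℂ) 0 1 = 0 ∧ (x : Matrix (Fin 2) (Fin 2) ℂ) 1 0 = 0}

/-- The set of anti-diagonal matrices in `SU2`: the coset `wT`. -/
def wTset : Set SU2 :=
  {x | (x : Matrix (Fin 2) (Fin 2) ℂ) 0 0 = 0 ∧ (x : Matrix (Fin 2) (Fin 2) ℂ) 1 1 = 0}

/-- `PU(2)`, the quotient of `SU(2)` by its center `{±I}`. -/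
abbrev PU2 := SU2 ⧸ Subgroup.center SU2

/-!
The argument only uses the relations `w x w⁻¹ = x⁻¹`, `w² = x^(2^(q-1))` and `x^(2^q) = 1`
satisfied by `x = ξ_{2^q}`, so it works in any group. Every element of `⟨x, w⟩`
is `x^n` or `w x^n`. A subgroup `K` meets `⟨x⟩` in `⟨x^(2^j)⟩` for some `j ≤ q`; if `K` is not
commutative it also contains some `w x^s`, whose square `w²` then forces `j ≤ q - 1`, and reducing
`s` modulo `2^j` gives `K = ⟨x^(2^j), w x^p⟩` with `p < 2^j`. For `j = q - 1` the first generator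
is the square of the second, so `K` would be cyclic; hence `j ≤ q - 2`, and `x^(2^j) = ξ_{2^(q-j)}`.
-/

lemma AddSubgroup.exists_eq_zmultiples_two_pow {S : AddSubgroup ℤ} {q : ℕ} (h : 2 ^ q ∈ S) :
    ∃ j ≤ q, S = zmultiples (2 ^ j) := by
  obtain ⟨a, rfl⟩ := Int.subgroup_cyclic S
  rw [← zmultiples_eq_closure, Int.mem_zmultiples_iff, ← Int.natAbs_dvd_natAbs] at h
  obtain ⟨j, hjq, hja⟩ := (Nat.dvd_prime_pow Nat.prime_two).mp (by simpa using h)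
  refine ⟨j, hjq, ?_⟩
  rw [← zmultiples_eq_closure, ← Int.natAbs_of_nonneg (by positivity : (0 : ℤ) ≤ 2 ^ j),
    ← Int.zmultiples_natAbs, hja]
  norm_cast

section GroupRelations

variable {G : Type*} [Group G] {x w : G}

lemma zpow_mul_eq_mul_zpow_neg (hconj : w * x * w⁻¹ = x⁻¹) (n : ℤ) :
    x ^ n * w = w * x ^ (-n) := by
  have hx : x ^ n = (w * x * w⁻¹) ^ (-n) := by rw [hconj]; group
  rw [hx, conj_zpow]
  group

lemma mul_zpow_mul_mul_zpow (hconj : w * x * w⁻¹ = x⁻¹) (a b : ℤ) :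
    w * x ^ a * (w * x ^ b) = w * w * x ^ (b - a) := by
  rw [mul_assoc w, ← mul_assoc (x ^ a), zpow_mul_eq_mul_zpow_neg hconj]
  group

lemma mul_zpow_mul_self (hconj : w * x * w⁻¹ = x⁻¹) (s : ℤ) :
    w * x ^ s * (w * x ^ s) = w * w := by
  rw [mul_zpow_mul_mul_zpow hconj, sub_self, zpow_zero, mul_one]

end GroupRelations

namespace Subgroup

variable {G : Type*} [Group G]

lemma isMulCommutative_of_le_zpowers {K : Subgroup G} {g : G} (h : K ≤ zpowers g) :
    IsMulCommutative K :=
  .of_setLike_mul_comm fun _ ha _ hb => setLike_mul_comm (h ha) (h hb)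

lemma exists_zpow_mem_iff_two_pow_dvd (K : Subgroup G) {x : G} {q : ℕ} (hx : x ^ 2 ^ q ∈ K) :
    ∃ j ≤ q, ∀ n : ℤ, x ^ n ∈ K ↔ 2 ^ j ∣ n := by
  obtain ⟨j, hjq, hj⟩ := AddSubgroup.exists_eq_zmultiples_two_pow
    (S := toAddSubgroup' (K.comap (zpowersHom G x))) (q := q) (by simpa [← zpow_natCast] using hx)
  exact ⟨j, hjq, fun n => by simpa [Int.mem_zmultiples_iff] using SetLike.ext_iff.mp hj n⟩

variable {x w : G}

lemma mul_zpow_mem_iff {K : Subgroup G} {s : ℤ} (hs : w * x ^ s ∈ K) (n : ℤ) :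
    w * x ^ n ∈ K ↔ x ^ (n - s) ∈ K := by
  have h : w * x ^ s * x ^ (n - s) = w * x ^ n := by group
  rw [← h, K.mul_mem_cancel_left hs]

lemma exists_zpow_or_mul_zpow_of_mem_closure {m : ℤ} (hconj : w * x * w⁻¹ = x⁻¹)
    (hw : w * w = x ^ m) {y : G} (hy : y ∈ closure {x, w}) :
    (∃ n : ℤ, y = x ^ n) ∨ ∃ n : ℤ, y = w * x ^ n := by
  induction hy using closure_induction with
  | mem y hy =>
    rcases hy with rfl | rfl
    · exact .inl ⟨1, (zpow_one y).symm⟩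
    · exact .inr ⟨0, by group⟩
  | one => exact .inl ⟨0, (zpow_zero x).symm⟩
  | mul y z _ _ ihy ihz =>
    rcases ihy with ⟨a, rfl⟩ | ⟨a, rfl⟩ <;> rcases ihz with ⟨b, rfl⟩ | ⟨b, rfl⟩
    · exact .inl ⟨a + b, by group⟩
    · exact .inr ⟨-a + b, by rw [← mul_assoc, zpow_mul_eq_mul_zpow_neg hconj]; group⟩
    · exact .inr ⟨a + b, by group⟩
    · exact .inl ⟨m + (b - a), by rw [mul_zpow_mul_mul_zpow hconj, hw]; group⟩
  | inv y _ ihy =>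
    rcases ihy with ⟨a, rfl⟩ | ⟨a, rfl⟩
    · exact .inl ⟨-a, by group⟩
    · refine .inr ⟨a - m, inv_eq_of_mul_eq_one_right ?_⟩
      rw [mul_zpow_mul_mul_zpow hconj, hw]
      group

lemma eq_closure_of_zpow_mem_iff_dvd {m : ℤ} (hconj : w * x * w⁻¹ = x⁻¹) (hw : w * w = x ^ m)
    {K : Subgroup G} (hK : K ≤ closure {x, w}) {d : ℕ} (hpow : ∀ n : ℤ, x ^ n ∈ K ↔ (d : ℤ) ∣ n)
    {p : ℤ} (hp : w * x ^ p ∈ K) : K = closure {x ^ d, w * x ^ p} := by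
  have hx_mem : x ^ d ∈ closure {x ^ d, w * x ^ p} := subset_closure (by simp)
  have hwp_mem : w * x ^ p ∈ closure {x ^ d, w * x ^ p} := subset_closure (by simp)
  refine le_antisymm (fun y hy => ?_) ?_
  · rcases exists_zpow_or_mul_zpow_of_mem_closure hconj hw (hK hy) with ⟨n, rfl⟩ | ⟨n, rfl⟩
    · obtain ⟨k, rfl⟩ := (hpow n).mp hy
      rw [show x ^ ((d : ℤ) * k) = (x ^ d) ^ k by group]
      exact zpow_mem hx_mem k
    · obtain ⟨k, hk⟩ := (hpow _).mp ((mul_zpow_mem_iff hp n).mp hy)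
      have hn : w * x ^ n = w * x ^ p * (x ^ d) ^ k := by
        rw [show n = p + d * k by linear_combination hk]
        group
      rw [hn]
      exact mul_mem hwp_mem (zpow_mem hx_mem k)
  · rw [closure_le, Set.insert_subset_iff, Set.singleton_subset_iff]
    exact ⟨by simpa using (hpow d).mpr dvd_rfl, hp⟩

theorem exists_eq_closure_of_not_isMulCommutative {q : ℕ} (hconj : w * x * w⁻¹ = x⁻¹)
    (hw : w * w = x ^ 2 ^ (q - 1)) (hx : x ^ 2 ^ q = 1) {K : Subgroup G}
    (hK : K ≤ closure {x, w}) (hc : ¬ IsMulCommutative K) :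
    ∃ j p : ℕ, j + 2 ≤ q ∧ p < 2 ^ j ∧ K = closure {x ^ 2 ^ j, w * x ^ p} := by
  have hw' : w * w = x ^ ((2 : ℤ) ^ (q - 1)) := by rw [hw, ← zpow_natCast]; push_cast; rfl
  obtain ⟨s, hs⟩ : ∃ s : ℤ, w * x ^ s ∈ K := by
    by_contra! hnone
    refine hc (isMulCommutative_of_le_zpowers (g := x) fun y hy => ?_)
    rcases exists_zpow_or_mul_zpow_of_mem_closure hconj hw' (hK hy) with ⟨n, rfl⟩ | ⟨n, rfl⟩
    exacts [⟨n, rfl⟩, (hnone n hy).elim]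
  obtain ⟨j, -, hpow⟩ := K.exists_zpow_mem_iff_two_pow_dvd (q := q) (by rw [hx]; exact K.one_mem)
  have hjq : j ≤ q - 1 := by
    have h : (2 : ℤ) ^ j ∣ 2 ^ (q - 1) := by
      rw [← hpow, ← hw', ← mul_zpow_mul_self hconj s]
      exact K.mul_mem hs hs
    exact Nat.pow_dvd_pow_iff_le_right'.mp (by exact_mod_cast h)
  obtain ⟨p, hp, hps⟩ : ∃ p : ℕ, p < 2 ^ j ∧ (2 : ℤ) ^ j ∣ p - s := by
    have h2j : (0 : ℤ) < 2 ^ j := by positivity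
    lift s % 2 ^ j to ℕ using Int.emod_nonneg s h2j.ne' with p hp
    exact ⟨p, by exact_mod_cast hp ▸ Int.emod_lt_of_pos s h2j,
      dvd_sub_comm.mp (Int.dvd_self_sub_of_emod_eq hp.symm)⟩
  have hKeq : K = closure {x ^ 2 ^ j, w * x ^ p} := by
    have hwp : w * x ^ (p : ℤ) ∈ K := (mul_zpow_mem_iff hs p).mpr ((hpow _).mpr hps)
    simpa using eq_closure_of_zpow_mem_iff_dvd hconj hw' hK (d := 2 ^ j) (by simpa using hpow) hwp
  have hj : j ≠ q - 1 := by
    intro hj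
    refine hc (isMulCommutative_of_le_zpowers (g := w * x ^ p) ?_)
    rw [hKeq, closure_le, Set.insert_subset_iff, Set.singleton_subset_iff]
    refine ⟨⟨2, ?_⟩, mem_zpowers _⟩
    simpa [hj, sq] using (mul_zpow_mul_self hconj p).trans hw
  exact ⟨j, p, by omega, hp, hKeq⟩

end Subgroup

lemma coe_ξ (m : ℕ) : (ξ m : Matrix (Fin 2) (Fin 2) ℂ) =
    diagonal ![exp (2 * Real.pi * I / m), exp (-(2 * Real.pi * I / m))] :=
  (diagonal_vec2 _ _).symm

lemma ξ_pow_mul (a b : ℕ) (ha : a ≠ 0) : ξ (a * b) ^ a = ξ b := by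
  ext1
  rw [SubmonoidClass.coe_pow, coe_ξ, coe_ξ, diagonal_pow]
  congr 1
  ext i
  fin_cases i <;>
    simp only [Fin.zero_eta, Fin.mk_one, Pi.pow_apply, cons_val_zero, cons_val_one,
      cons_val_fin_one, Nat.cast_mul, ← exp_nat_mul, mul_neg] <;>
    field_simp

lemma ξ_one : ξ 1 = 1 := by
  ext1
  rw [coe_ξ, OneMemClass.coe_one, ← diagonal_one]
  congr 1
  ext i
  fin_cases i <;> simp [exp_neg]

lemma w_mul_w : w * w = ξ 2 := by
  have h : 2 * Real.pi * I / (2 : ℕ) = Real.pi * I := by push_cast; ring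
  ext1
  rw [Submonoid.coe_mul, coe_ξ, h]
  simp [w, ← diagonal_vec2, exp_neg]

lemma w_mul_ξ_mul_w_inv (m : ℕ) : w * ξ m * w⁻¹ = (ξ m)⁻¹ := by
  ext1
  change w.1 * (ξ m).1 * star w.1 = star (ξ m).1
  ext i j
  fin_cases i <;> fin_cases j <;>
    simp [w, ξ, Matrix.mul_apply, Fin.sum_univ_two, Matrix.star_apply, xi_conj_exp, xi_conj_exp']

/-- For `q ≥ 2`, every non-commutative subgroup of `Q_{2^{q+1}}` is generated by `ξ_{2^r}` and
`w ξ_{2^q}^p` for some `2 ≤ r ≤ q` and `0 ≤ p < 2^{q-r}`. -/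
theorem stmt9 (q : ℕ) (hq : 2 ≤ q) (K : Subgroup SU2) (hK : K ≤ genQ q)
    (hc : ¬ IsMulCommutative K) :
    ∃ r p : ℕ, 2 ≤ r ∧ r ≤ q ∧ p < 2 ^ (q - r) ∧
      K = Subgroup.closure {ξ (2 ^ r), w * (ξ (2 ^ q)) ^ p} := by
  have hw : w * w = ξ (2 ^ q) ^ 2 ^ (q - 1) := by
    rw [w_mul_w, ← ξ_pow_mul (2 ^ (q - 1)) 2 (by positivity), ← pow_succ,
      Nat.sub_add_cancel (by omega)]
  have hx : ξ (2 ^ q) ^ 2 ^ q = 1 := by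
    rw [← ξ_one, ← ξ_pow_mul (2 ^ q) 1 (by positivity), mul_one]
  obtain ⟨j, p, hjq, hp, rfl⟩ :=
    Subgroup.exists_eq_closure_of_not_isMulCommutative (w_mul_ξ_mul_w_inv _) hw hx hK hc
  refine ⟨q - j, p, by omega, by omega, by rwa [Nat.sub_sub_self (by omega)], ?_⟩
  rw [← ξ_pow_mul (2 ^ j) (2 ^ (q - j)) (by positivity), ← pow_add,
    Nat.add_sub_cancel' (by omega)]

end
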